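/- arXiv:1909.04187 — 2 statements merged into one kernel-verified Lean document; each statement's English description precedes it below -/
import Mathlib

section
/- Let (K, η) be a quasi-biangular G-algebra with central element z, and let μ_c : K → K be left multiplication by c. Then for all g, h ∈ G and all c ∈ K_{ghg⁻¹h⁻¹}, the trace identity Tr(μ_c ∘ φ_h : K_g → K_g) = Tr(φ_{g⁻¹} ∘ μ_c : K_h → K_h) holds, where φ_g(a) = Σ_i p_i^g a z q_i^g and the trace of an endomorphism f of K_g is Tr(f) = Σ_i η(f(p_i^g), q_i^g). -/
open scoped TensorProduct

/-- A Frobenius `G`-algebra over a commutative ring `k`: a `G`-graded associative unital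
`k`-algebra `K = ⊕_{g∈G} K_g` together with a symmetric bilinear form `η` satisfying
`η(ab,c) = η(a,bc)`, nondegenerate on `K_g ⊗ K_{g⁻¹}` and zero on other pairs of components,
with finite inner product elements `Σ_i p_i^g ⊗ q_i^g` characterized by
`a = Σ_i η(a, q_i^g) • p_i^g` for all `a ∈ K_g`. -/
structure FrobeniusGAlgebraData (k G K : Type*) [CommRing k] [Group G] [DecidableEq G]
    [Ring K] [Algebra k K] where
  Kg : G → Submodule k K
  internal : DirectSum.IsInternal Kg
  one_mem : (1 : K) ∈ Kg 1
  mul_mem : ∀ {g h : G} {a b : K}, a ∈ Kg g → b ∈ Kg h → a * b ∈ Kg (g * h)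
  form : K →ₗ[k] K →ₗ[k] k
  form_symm : ∀ a b : K, form a b = form b a
  form_frob : ∀ a b c : K, form (a * b) c = form a (b * c)
  form_orth : ∀ {g h : G} {a b : K}, a ∈ Kg g → b ∈ Kg h → g * h ≠ 1 → form a b = 0
  form_nondeg : ∀ (g : G) (a : K), a ∈ Kg g → (∀ b ∈ Kg g⁻¹, form a b = 0) → a = 0
  n : G → ℕ
  p : ∀ g : G, Fin (n g) → K
  q : ∀ g : G, Fin (n g) → K
  p_mem : ∀ g i, p g i ∈ Kg g
  q_mem : ∀ g i, q g i ∈ Kg g⁻¹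
  char : ∀ (g : G), ∀ a ∈ Kg g, a = ∑ i, form a (q g i) • p g i

variable {k G K : Type*} [CommRing k] [Group G] [DecidableEq G] [Ring K] [Algebra k K]

/-- The projection `Ψ(a) = Σ_i p_i^e a q_i^e`. -/
def FrobeniusGAlgebraData.Psi (F : FrobeniusGAlgebraData k G K) (a : K) : K :=
  ∑ i, F.p 1 i * a * F.q 1 i

/-- The map `φ_g(a) = Σ_i p_i^g a z q_i^g`. -/
def FrobeniusGAlgebraData.phi (F : FrobeniusGAlgebraData k G K) (z : K) (g : G) (a : K) : K :=
  ∑ i, F.p g i * a * z * F.q g i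

namespace FrobeniusGAlgebraData

variable (F : FrobeniusGAlgebraData k G K)

lemma T_mul (a b : K) : F.form (a * b) 1 = F.form a b := by
  rw [F.form_frob, mul_one]

lemma T_cyc (a b : K) : F.form (a * b) 1 = F.form (b * a) 1 := by
  rw [F.T_mul, F.T_mul, F.form_symm]

lemma dual_char (g : G) (b : K) (hb : b ∈ F.Kg g⁻¹) :
    b = ∑ i, F.form (F.p g i) b • F.q g i := by
  have hd : b - ∑ i, F.form (F.p g i) b • F.q g i ∈ F.Kg g⁻¹ :=
    sub_mem hb (Submodule.sum_mem _ fun i _ => Submodule.smul_mem _ _ (F.q_mem g i))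
  have hz : ∀ x ∈ F.Kg (g⁻¹)⁻¹, F.form (b - ∑ i, F.form (F.p g i) b • F.q g i) x = 0 := by
    intro x hx
    rw [inv_inv] at hx
    rw [F.form_symm]
    have hx' := F.char g x hx
    have : F.form x (∑ i, F.form (F.p g i) b • F.q g i)
        = ∑ i, F.form (F.p g i) b * F.form x (F.q g i) := by
      rw [map_sum]
      exact Finset.sum_congr rfl fun i _ => by rw [map_smul, smul_eq_mul]
    rw [map_sub, this]
    have hxb : F.form x b = ∑ i, F.form x (F.q g i) * F.form (F.p g i) b := by
      conv_lhs => rw [hx']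
      rw [map_sum, LinearMap.sum_apply]
      exact Finset.sum_congr rfl fun i _ => by
        rw [map_smul, LinearMap.smul_apply, smul_eq_mul]
    rw [hxb]
    rw [sub_eq_zero]
    exact Finset.sum_congr rfl fun i _ => mul_comm _ _
  have := F.form_nondeg g⁻¹ _ hd hz
  exact (sub_eq_zero.mp this)


/-- Bilinear map `(x, y) ↦ η(a * x * (b * y * c), 1)`. -/
def sandwich (a b c : K) : K →ₗ[k] K →ₗ[k] k :=
  LinearMap.mk₂ k (fun x y => F.form (a * x * (b * y * c)) 1)
    (fun m₁ m₂ n => by simp [mul_add, add_mul])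
    (fun r m n => by simp [mul_smul_comm, smul_mul_assoc])
    (fun m n₁ n₂ => by simp [mul_add, add_mul])
    (fun r m n => by simp [mul_smul_comm, smul_mul_assoc])

@[simp] lemma sandwich_apply (a b c x y : K) :
    F.sandwich a b c x y = F.form (a * x * (b * y * c)) 1 := rfl

lemma swap_pairs (g : G) (Φ : K →ₗ[k] K →ₗ[k] k) :
    ∑ i, Φ (F.p g i) (F.q g i) = ∑ i, Φ (F.q g⁻¹ i) (F.p g⁻¹ i) := by
  have key : ∀ i : Fin (F.n g),
      F.p g i = ∑ j, F.form (F.p g⁻¹ j) (F.p g i) • F.q g⁻¹ j := by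
    intro i
    exact F.dual_char g⁻¹ _ (by simpa using F.p_mem g i)
  calc ∑ i, Φ (F.p g i) (F.q g i)
      = ∑ i, ∑ j, F.form (F.p g⁻¹ j) (F.p g i) • Φ (F.q g⁻¹ j) (F.q g i) := by
        refine Finset.sum_congr rfl fun i _ => ?_
        conv_lhs => rw [key i]
        rw [map_sum, LinearMap.sum_apply]
        exact Finset.sum_congr rfl fun j _ => by
          rw [map_smul, LinearMap.smul_apply]
    _ = ∑ j, Φ (F.q g⁻¹ j) (∑ i, F.form (F.p g⁻¹ j) (F.p g i) • F.q g i) := by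
        rw [Finset.sum_comm]
        exact Finset.sum_congr rfl fun j _ => by
          rw [map_sum]
          exact Finset.sum_congr rfl fun i _ => by rw [map_smul]
    _ = ∑ j, Φ (F.q g⁻¹ j) (F.p g⁻¹ j) := by
        refine Finset.sum_congr rfl fun j _ => ?_
        congr 1
        have := F.dual_char g (F.p g⁻¹ j) (F.p_mem g⁻¹ j)
        conv_rhs => rw [this]
        exact Finset.sum_congr rfl fun i _ => by rw [F.form_symm]

lemma slide_one (g : G) (w : K) (hw : w ∈ F.Kg 1) (Φ : K →ₗ[k] K →ₗ[k] k) :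
    ∑ i, Φ (w * F.p g i) (F.q g i) = ∑ i, Φ (F.p g i) (F.q g i * w) := by
  have key : ∀ j : Fin (F.n g),
      w * F.p g j = ∑ m, F.form (F.p g j) (F.q g m * w) • F.p g m := by
    intro j
    have hmem : w * F.p g j ∈ F.Kg g := by
      have := F.mul_mem hw (F.p_mem g j); simpa using this
    have := F.char g _ hmem
    conv_lhs => rw [this]
    refine Finset.sum_congr rfl fun m _ => ?_
    congr 1
    rw [F.form_frob, F.form_symm, F.form_frob]
  calc ∑ j, Φ (w * F.p g j) (F.q g j)
      = ∑ j, ∑ m, F.form (F.p g j) (F.q g m * w) • Φ (F.p g m) (F.q g j) := by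
        refine Finset.sum_congr rfl fun j _ => ?_
        conv_lhs => rw [key j]
        rw [map_sum, LinearMap.sum_apply]
        exact Finset.sum_congr rfl fun m _ => by
          rw [map_smul, LinearMap.smul_apply]
    _ = ∑ m, Φ (F.p g m) (∑ j, F.form (F.p g j) (F.q g m * w) • F.q g j) := by
        rw [Finset.sum_comm]
        exact Finset.sum_congr rfl fun m _ => by
          rw [map_sum]
          exact Finset.sum_congr rfl fun j _ => by rw [map_smul]
    _ = ∑ m, Φ (F.p g m) (F.q g m * w) := by
        refine Finset.sum_congr rfl fun m _ => ?_
        congr 1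
        have hm : F.q g m * w ∈ F.Kg g⁻¹ := by
          have := F.mul_mem (F.q_mem g m) hw; simpa using this
        exact (F.dual_char g _ hm).symm


/-- The element `w_g = Σ_i p_i^g z² q_i^g`. -/
def wel (z : K) (g : G) : K := ∑ i, F.p g i * z * z * F.q g i

lemma wel_mem (z : K) (hz : z ∈ F.Kg 1) (g : G) : F.wel z g ∈ F.Kg 1 := by
  refine Submodule.sum_mem _ fun i _ => ?_
  have := F.mul_mem (F.mul_mem (F.mul_mem (F.p_mem g i) hz) hz) (F.q_mem g i)
  simpa using this

lemma mul_z (z : K) (hzcentral : ∀ a ∈ F.Kg 1, z * a = a * z)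
    (hbiang : ∀ g : G, ∑ i, F.p g i * z * F.q g i = 1)
    (g : G) (x : K) (hx : x ∈ F.Kg g) : x * z = F.wel z g * x := by
  have h1 : x * z = (∑ i, F.p g i * z * F.q g i) * (x * z) := by
    rw [hbiang g, one_mul]
  rw [h1, Finset.sum_mul, wel, Finset.sum_mul]
  refine Finset.sum_congr rfl fun i _ => ?_
  have hc := hzcentral (F.q g i * x) (by simpa using F.mul_mem (F.q_mem g i) hx)
  simp only [mul_assoc]
  have h2 : F.q g i * (x * z) = z * (F.q g i * x) := by rw [← mul_assoc, ← hc]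
  rw [h2]

lemma z_mul (z : K) (hzcentral : ∀ a ∈ F.Kg 1, z * a = a * z)
    (hbiang : ∀ g : G, ∑ i, F.p g i * z * F.q g i = 1)
    (g : G) (x : K) (hx : x ∈ F.Kg g) : z * x = x * F.wel z g⁻¹ := by
  have h1 : z * x = (z * x) * ∑ i, F.p g⁻¹ i * z * F.q g⁻¹ i := by
    rw [hbiang g⁻¹, mul_one]
  rw [h1, Finset.mul_sum, wel, Finset.mul_sum]
  refine Finset.sum_congr rfl fun i _ => ?_
  have hc := hzcentral (x * F.p g⁻¹ i) (by simpa using F.mul_mem hx (F.p_mem g⁻¹ i))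
  simp only [mul_assoc]
  conv_lhs => rw [← mul_assoc x, ← mul_assoc z, hc]
  simp only [mul_assoc]

end FrobeniusGAlgebraData

/-- Trace identity: `Tr(μ_c ∘ φ_h : K_g → K_g) = Tr(φ_{g⁻¹} ∘ μ_c : K_h → K_h)` for
`c ∈ K_{ghg⁻¹h⁻¹}`, where the trace of an endomorphism `f` of `K_g` is
`Tr(f) = Σ_i η(f(p_i^g), q_i^g)`. -/
theorem quasiBiangular_trace_identity
    (F : FrobeniusGAlgebraData k G K)
    (z : K) (hz : z ∈ F.Kg 1)
    (hzcentral : ∀ a ∈ F.Kg 1, z * a = a * z)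
    (hbiang : ∀ g : G, ∑ i, F.p g i * z * F.q g i = 1)
    (hstrong : ∀ g h : G, F.Kg g * F.Kg h = F.Kg (g * h))
    (g h : G) (c : K) (hc : c ∈ F.Kg (g * h * g⁻¹ * h⁻¹)) :
    ∑ i, F.form (c * F.phi z h (F.p g i)) (F.q g i)
      = ∑ i, F.form (F.phi z g⁻¹ (c * F.p h i)) (F.q h i) := by
  classical
  set w : K := F.wel z h with hwdef
  have hwmem : w ∈ F.Kg 1 := F.wel_mem z hz h
  have hzq : ∀ j : Fin (F.n h), z * F.q h j = F.q h j * w := fun j => by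
    simpa using F.z_mul z hzcentral hbiang h⁻¹ (F.q h j) (F.q_mem h j)
  have hpz : ∀ j : Fin (F.n h), w * F.p h j = F.p h j * z := fun j =>
    (F.mul_z z hzcentral hbiang h (F.p h j) (F.p_mem h j)).symm
  calc
    ∑ i, F.form (c * F.phi z h (F.p g i)) (F.q g i)
        = ∑ i : Fin (F.n g), ∑ j : Fin (F.n h),
            F.form (c * (F.p h j * (F.p g i * (z * (F.q h j * F.q g i))))) 1 := by
          refine Finset.sum_congr rfl fun i _ => ?_
          rw [FrobeniusGAlgebraData.phi]
          simp only [Finset.mul_sum, map_sum, LinearMap.sum_apply]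
          refine Finset.sum_congr rfl fun j _ => ?_
          rw [← F.T_mul]
          congr 1
          simp only [mul_assoc]
    _ = ∑ j : Fin (F.n h), ∑ i : Fin (F.n g),
            F.form (c * (F.p h j * (F.p g i * (z * (F.q h j * F.q g i))))) 1 :=
          Finset.sum_comm
    _ = ∑ j : Fin (F.n h), ∑ i : Fin (F.n g),
            F.form (c * (F.p h j * (F.p g i * (F.q h j * (w * F.q g i))))) 1 := by
          refine Finset.sum_congr rfl fun j _ => Finset.sum_congr rfl fun i _ => ?_
          congr 1
          rw [← mul_assoc z, hzq j]
          simp only [mul_assoc]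
    _ = ∑ j : Fin (F.n h),
            (∑ i : Fin (F.n g), F.sandwich c (F.p g i) (F.q g i))
              (F.p h j) (F.q h j * w) := by
          refine Finset.sum_congr rfl fun j _ => ?_
          simp only [LinearMap.sum_apply, FrobeniusGAlgebraData.sandwich_apply, mul_assoc]
    _ = ∑ j : Fin (F.n h),
            (∑ i : Fin (F.n g), F.sandwich c (F.p g i) (F.q g i))
              (w * F.p h j) (F.q h j) :=
          (F.slide_one h w hwmem _).symm
    _ = ∑ j : Fin (F.n h), ∑ i : Fin (F.n g),
            F.form (c * (F.p h j * (z * (F.p g i * (F.q h j * F.q g i))))) 1 := by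
          refine Finset.sum_congr rfl fun j _ => ?_
          simp only [LinearMap.sum_apply, FrobeniusGAlgebraData.sandwich_apply]
          refine Finset.sum_congr rfl fun i _ => ?_
          congr 1
          rw [hpz j]
          simp only [mul_assoc]
    _ = ∑ j : Fin (F.n g), ∑ i : Fin (F.n h),
            F.form (c * (F.p h i * (z * (F.p g j * (F.q h i * F.q g j))))) 1 :=
          Finset.sum_comm
    _ = ∑ j : Fin (F.n g),
            (∑ i : Fin (F.n h), F.sandwich 1 (c * (F.p h i * z)) (F.q h i))
              (F.q g j) (F.p g j) := by
          refine Finset.sum_congr rfl fun j _ => ?_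
          simp only [LinearMap.sum_apply, FrobeniusGAlgebraData.sandwich_apply, one_mul]
          refine Finset.sum_congr rfl fun i _ => ?_
          conv_rhs => rw [F.T_cyc]
          congr 1
          simp only [mul_assoc]
    _ = ∑ j : Fin (F.n g⁻¹),
            (∑ i : Fin (F.n h), F.sandwich 1 (c * (F.p h i * z)) (F.q h i))
              (F.p g⁻¹ j) (F.q g⁻¹ j) := by
          have := F.swap_pairs g⁻¹
            (∑ i : Fin (F.n h), F.sandwich 1 (c * (F.p h i * z)) (F.q h i))
          rw [show (g⁻¹)⁻¹ = g from inv_inv g] at this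
          exact this.symm
    _ = ∑ i, F.form (F.phi z g⁻¹ (c * F.p h i)) (F.q h i) := by
          simp only [LinearMap.sum_apply, FrobeniusGAlgebraData.sandwich_apply, one_mul]
          rw [Finset.sum_comm]
          refine Finset.sum_congr rfl fun i _ => ?_
          rw [FrobeniusGAlgebraData.phi]
          simp only [map_sum, LinearMap.sum_apply]
          refine Finset.sum_congr rfl fun j _ => ?_
          conv_rhs => rw [← F.T_mul]
          congr 1
          simp only [mul_assoc]
end

section
/- Let (K, η) be a quasi-biangular G-algebra with central element z. Then the fixed subset K_e ⊗_{K_e ⊗ K_e^{op}} K_g, identified with {b ∈ K_g | ab = ba for all a ∈ K_e}, equals Ψ(K_g) for every g ∈ G, where Ψ(a) = Σ_i p_i^e a q_i^e. Concretely: (1) every b ∈ K_g commuting with all of K_e satisfies b = Ψ(bz); (2) every element Ψ(a) with a ∈ K_g commutes with all elements of K_e. -/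
open scoped TensorProduct

variable {k G K : Type*} [CommRing k] [Group G] [DecidableEq G] [Ring K] [Algebra k K]

lemma FrobeniusGAlgebraData.dual_char_s10 (F : FrobeniusGAlgebraData k G K) (g : G) (b : K)
    (hb : b ∈ F.Kg g⁻¹) : b = ∑ i, F.form (F.p g i) b • F.q g i := by
  set b' : K := ∑ i, F.form (F.p g i) b • F.q g i with hb'
  have hb'mem : b' ∈ F.Kg g⁻¹ := Submodule.sum_mem _ fun i _ =>
    Submodule.smul_mem _ _ (F.q_mem g i)
  have key : ∀ c ∈ F.Kg g, F.form c (b - b') = 0 := by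
    intro c hc
    have h1 : F.form c b = ∑ i, F.form c (F.q g i) * F.form (F.p g i) b := by
      conv_lhs => rw [F.char g c hc]
      rw [map_sum, LinearMap.sum_apply]
      refine Finset.sum_congr rfl fun i _ => ?_
      rw [map_smul, LinearMap.smul_apply, smul_eq_mul, F.form_symm]
    have h2 : F.form c b' = ∑ i, F.form (F.p g i) b * F.form c (F.q g i) := by
      rw [hb', map_sum]
      refine Finset.sum_congr rfl fun i _ => ?_
      rw [map_smul, smul_eq_mul]
    rw [map_sub, h1, h2, sub_eq_zero]
    exact Finset.sum_congr rfl fun i _ => mul_comm _ _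
  have h0 : b - b' = 0 := by
    refine F.form_nondeg g⁻¹ (b - b') (Submodule.sub_mem _ hb hb'mem) fun c hc => ?_
    rw [inv_inv] at hc
    rw [F.form_symm]
    exact key c hc
  exact eq_of_sub_eq_zero h0

lemma FrobeniusGAlgebraData.swap (F : FrobeniusGAlgebraData k G K) (c : K)
    (hc : c ∈ F.Kg 1) (a : K) :
    ∑ i, c * F.p 1 i * a * F.q 1 i = ∑ i, F.p 1 i * a * (F.q 1 i * c) := by
  have hq : ∀ i, F.q 1 i * c ∈ F.Kg (1 : G)⁻¹ := by
    intro i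
    have := F.mul_mem (F.q_mem 1 i) hc
    simpa using this
  calc ∑ i, c * F.p 1 i * a * F.q 1 i
      = ∑ i, ∑ j, F.form (c * F.p 1 i) (F.q 1 j) • (F.p 1 j * a * F.q 1 i) := by
        refine Finset.sum_congr rfl fun i _ => ?_
        have hcp : c * F.p 1 i ∈ F.Kg (1 : G) := by
          have := F.mul_mem hc (F.p_mem 1 i); simpa using this
        conv_lhs => rw [F.char 1 (c * F.p 1 i) hcp]
        rw [Finset.sum_mul, Finset.sum_mul]
        refine Finset.sum_congr rfl fun j _ => ?_
        rw [smul_mul_assoc, smul_mul_assoc]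
    _ = ∑ j, ∑ i, F.form (c * F.p 1 i) (F.q 1 j) • (F.p 1 j * a * F.q 1 i) :=
        Finset.sum_comm
    _ = ∑ j, F.p 1 j * a * (F.q 1 j * c) := by
        refine Finset.sum_congr rfl fun j _ => ?_
        have : F.q 1 j * c = ∑ i, F.form (F.p 1 i) (F.q 1 j * c) • F.q 1 i :=
          F.dual_char_s10 1 _ (hq j)
        conv_rhs => rw [this]
        rw [Finset.mul_sum]
        refine Finset.sum_congr rfl fun i _ => ?_
        rw [mul_smul_comm]
        congr 1
        rw [F.form_symm, ← F.form_frob, F.form_symm]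

/-- The set of elements of `K_g` commuting with every element of the principal component
`K_e` equals `Ψ(K_g)`: (1) any such `b` satisfies `b = Ψ(bz)`, and (2) every `Ψ(a)`
with `a ∈ K_g` commutes with all elements of `K_e`. -/
theorem quasiBiangular_G_center_description
    (F : FrobeniusGAlgebraData k G K)
    (z : K) (hz : z ∈ F.Kg 1)
    (hzcentral : ∀ a ∈ F.Kg 1, z * a = a * z)
    (hbiang : ∀ g : G, ∑ i, F.p g i * z * F.q g i = 1)
    (hstrong : ∀ g h : G, F.Kg g * F.Kg h = F.Kg (g * h))
    (g : G) :
    ({b : K | b ∈ F.Kg g ∧ ∀ a ∈ F.Kg 1, a * b = b * a} = F.Psi '' (F.Kg g)) ∧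
    (∀ b ∈ F.Kg g, (∀ a ∈ F.Kg 1, a * b = b * a) → b = F.Psi (b * z)) ∧
    (∀ a ∈ F.Kg g, ∀ c ∈ F.Kg 1, F.Psi a * c = c * F.Psi a) := by
  have comm : ∀ (a : K), ∀ c ∈ F.Kg 1, F.Psi a * c = c * F.Psi a := by
    intro a c hc
    unfold FrobeniusGAlgebraData.Psi
    rw [Finset.sum_mul, Finset.mul_sum]
    have := (F.swap c hc a).symm
    calc ∑ i, F.p 1 i * a * F.q 1 i * c = ∑ i, F.p 1 i * a * (F.q 1 i * c) := by
          refine Finset.sum_congr rfl fun i _ => ?_; rw [mul_assoc]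
      _ = ∑ i, c * F.p 1 i * a * F.q 1 i := this
      _ = ∑ i, c * (F.p 1 i * a * F.q 1 i) := by
          refine Finset.sum_congr rfl fun i _ => ?_; simp [mul_assoc]
  have fix : ∀ b ∈ F.Kg g, (∀ a ∈ F.Kg 1, a * b = b * a) → b = F.Psi (b * z) := by
    intro b hb hbc
    unfold FrobeniusGAlgebraData.Psi
    have : ∀ i, F.p 1 i * (b * z) * F.q 1 i = b * (F.p 1 i * z * F.q 1 i) := by
      intro i
      rw [← mul_assoc, hbc (F.p 1 i) (F.p_mem 1 i)]
      simp [mul_assoc]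
    rw [Finset.sum_congr rfl fun i _ => this i, ← Finset.mul_sum, hbiang 1, mul_one]
  refine ⟨?_, fix, fun a _ => comm a⟩
  ext b
  constructor
  · rintro ⟨hb, hbc⟩
    exact ⟨b * z, by simpa using F.mul_mem hb hz, (fix b hb hbc).symm⟩
  · rintro ⟨a, ha, rfl⟩
    constructor
    · refine Submodule.sum_mem _ fun i _ => ?_
      have := F.mul_mem (F.mul_mem (F.p_mem 1 i) ha) (F.q_mem 1 i)
      simpa using this
    · intro c hc
      exact (comm a c hc).symm
end
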